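/- Let X be a Banach space with a Schauder basis (e_i), let K ≥ 1, let α be a countable ordinal, and let ε > 0. If there exists an ℓ₁-K-tree on X of order at least ω·α, then there exists an ℓ₁-(K+ε)-block basis tree on X (with respect to (e_i)) of order at least α. -/

import Mathlib

universe u v

open Ordinal

/- ## General machinery for trees (as partially ordered sets / sets with a relation) -/

section Trees

variable {σ : Type*} {τ : Type*}

/-- The derived tree `D(T) = {x ∈ T : x < y for some y ∈ T}` (with respect to a strict
relation `lt`): `T` with all its terminal nodes removed. -/
def derivSet (lt : σ → σ → Prop) (T : Set σ) : Set σ :=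
  {x ∈ T | ∃ y ∈ T, lt x y}

/-- The transfinite iterates of the derivative: `T⁰ = T`, `T^(γ+1) = D(T^γ)`, and
`T^λ = ⋂_{γ<λ} T^γ` for limit `λ`. -/
noncomputable def derivIter (lt : σ → σ → Prop) (T : Set σ) (o : Ordinal.{0}) : Set σ :=
  Ordinal.limitRecOn (motive := fun _ => Set σ) o T (fun _ S => derivSet lt S)
    (fun o _ ih => ⋂ (o' : Ordinal.{0}) (h : o' < o), ih o' h)

/-- A tree is well-founded if it contains no infinite linearly ordered subset. -/
def TreeWF (lt : σ → σ → Prop) (T : Set σ) : Prop :=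
  ¬∃ S : Set σ, S ⊆ T ∧ S.Infinite ∧ ∀ x ∈ S, ∀ y ∈ S, x ≠ y → lt x y ∨ lt y x

/-- The order `o(T)` of a (well-founded) tree: the least `γ` with `T^γ = ∅`. -/
noncomputable def treeOrder (lt : σ → σ → Prop) (T : Set σ) : Ordinal.{0} :=
  sInf {o : Ordinal.{0} | derivIter lt T o = ∅}

/-- A tree isomorphism from `S` (ordered by `leS`) onto `T` (ordered by `leT`):
a bijection of `S` onto `T` preserving order in both directions. -/
def TreeIso (leS : σ → σ → Prop) (leT : τ → τ → Prop) (S : Set σ) (T : Set τ) : Prop :=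
  ∃ f : σ → τ, (∀ x ∈ S, f x ∈ T) ∧ (∀ y ∈ T, ∃ x ∈ S, f x = y) ∧
    Set.InjOn f S ∧ ∀ x ∈ S, ∀ y ∈ S, (leS x y ↔ leT (f x) (f y))

/-- The strict relation associated to a partial order relation `le`. -/
def strictOf (le : σ → σ → Prop) : σ → σ → Prop := fun a b => le a b ∧ a ≠ b

/-- A tree (in the abstract sense) inside a partially ordered set: a countable nonempty
set such that, for each `x ∈ T`, `{y ∈ T : y < x}` is finite and linearly ordered. -/
def IsAbsTree (le : σ → σ → Prop) (T : Set σ) : Prop :=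
  T.Nonempty ∧ T.Countable ∧
    ∀ x ∈ T, {y ∈ T | strictOf le y x}.Finite ∧
      ∀ y ∈ T, strictOf le y x → ∀ z ∈ T, strictOf le z x → le y z ∨ le z y

end Trees

/- ## Trees on a set `X`: subsets of the nonempty finite sequences from `X`,
ordered by end-extension (list prefix order). -/

section TreesOn

variable {X : Type*}

/-- The strict prefix (end-extension) order on finite sequences. -/
def listLt : List X → List X → Prop := fun x y => x <+: y ∧ x ≠ y

/-- A tree on a set `X`: a countable nonempty collection of nonempty finite sequences
from `X` (ordered by end-extension). -/
def IsTreeOn (T : Set (List X)) : Prop :=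
  T.Nonempty ∧ T.Countable ∧ ∀ l ∈ T, l ≠ []

end TreesOn

/- ## ℓ₁ / ℓ∞ / ℓ_p nodes and trees on a Banach space -/

section Banach

variable {X : Type*} [NormedAddCommGroup X] [NormedSpace ℝ X]

/-- `(x_i)₁^m` is a finite sequence of norm-one vectors `K`-equivalent to the unit vector
basis of `ℓ₁^m`. -/
def IsL1Node (K : ℝ) (l : List X) : Prop :=
  (∀ x ∈ l, ‖x‖ = 1) ∧
  ∃ c C : ℝ, 0 < c ∧ 0 < C ∧ C / c ≤ K ∧
    ∀ a : Fin l.length → ℝ,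
      c * (∑ i, |a i|) ≤ ‖∑ i, a i • l.get i‖ ∧
        ‖∑ i, a i • l.get i‖ ≤ C * (∑ i, |a i|)

/-- `(x_i)₁^m` is a finite sequence of norm-one vectors `K`-equivalent to the unit vector
basis of `ℓ∞^m`. -/
def IsLinfNode (K : ℝ) (l : List X) : Prop :=
  (∀ x ∈ l, ‖x‖ = 1) ∧
  ∃ c C : ℝ, 0 < c ∧ 0 < C ∧ C / c ≤ K ∧
    ∀ a : Fin l.length → ℝ,
      c * (⨆ i, |a i|) ≤ ‖∑ i, a i • l.get i‖ ∧
        ‖∑ i, a i • l.get i‖ ≤ C * (⨆ i, |a i|)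

/-- `(x_i)₁^m` is a finite sequence of norm-one vectors `K`-equivalent to the unit vector
basis of `ℓ_p^m`. -/
noncomputable def IsLpNode (p K : ℝ) (l : List X) : Prop :=
  (∀ x ∈ l, ‖x‖ = 1) ∧
  ∃ c C : ℝ, 0 < c ∧ 0 < C ∧ C / c ≤ K ∧
    ∀ a : Fin l.length → ℝ,
      c * ((∑ i, |a i| ^ p) ^ (1 / p)) ≤ ‖∑ i, a i • l.get i‖ ∧
        ‖∑ i, a i • l.get i‖ ≤ C * ((∑ i, |a i| ^ p) ^ (1 / p))

/-- An ℓ₁-`K`-tree on `X`. -/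
def IsL1KTree (K : ℝ) (T : Set (List X)) : Prop :=
  IsTreeOn T ∧ ∀ l ∈ T, IsL1Node K l

/-- An ℓ∞-`K`-tree on `X`. -/
def IsLinfKTree (K : ℝ) (T : Set (List X)) : Prop :=
  IsTreeOn T ∧ ∀ l ∈ T, IsLinfNode K l

/-- An ℓ_p-`K`-tree on `X`. -/
def IsLpKTree (p K : ℝ) (T : Set (List X)) : Prop :=
  IsTreeOn T ∧ ∀ l ∈ T, IsLpNode p K l

/-- `ys` is a normalized block basis of the finite sequence `zs`:
`y_j = ∑_{i ∈ E_j} a_i z_i` with `‖y_j‖ = 1` and `E₁ < E₂ < …` successive subsets. -/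
def IsNormBlockOf (ys zs : List X) : Prop :=
  ∃ (E : Fin ys.length → Finset (Fin zs.length)) (a : Fin zs.length → ℝ),
    (∀ j, (E j).Nonempty) ∧
    (∀ j₁ j₂ : Fin ys.length, j₁ < j₂ → ∀ i₁ ∈ E j₁, ∀ i₂ ∈ E j₂, i₁ < i₂) ∧
    ∀ j, ys.get j = ∑ i ∈ E j, a i • zs.get i ∧ ‖ys.get j‖ = 1

/-- `p` is the initial node of the subtree `T'` lying below `x`. -/
def IsInitialBelow (T' : Set (List X)) (p x : List X) : Prop :=
  p ∈ T' ∧ p <+: x ∧ ∀ q ∈ T', q <+: x → p <+: q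

/-- `k` is the length of the predecessor node of `p` in `T` (`k = 0` when `p` is an
initial node of `T`). -/
def PredLenIn (T : Set (List X)) (p : List X) (k : ℕ) : Prop :=
  (k = 0 ∧ ∀ z ∈ T, z <+: p → z = p) ∨
  (∃ z ∈ T, z <+: p ∧ z ≠ p ∧ z.length = k ∧ ∀ w ∈ T, w <+: p → w ≠ p → w <+: z)

/-- `S` is a block subtree of `T` (written `S ⪯ T`): there are a subtree `T' ⊆ T` and a
tree isomorphism `f : T' → S` such that each `f(x)` is built from normalized block bases
as in the definition of Judd–Odell. -/
def IsBlockSubtree (S T : Set (List X)) : Prop :=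
  ∃ (T' : Set (List X)) (f : List X → List X),
    T' ⊆ T ∧
    (∀ x ∈ T', f x ∈ S) ∧
    (∀ y ∈ S, ∃ x ∈ T', f x = y) ∧
    (∀ x ∈ T', ∀ y ∈ T', (x <+: y ↔ f x <+: f y)) ∧
    (∀ x ∈ T', ∀ p, IsInitialBelow T' p x → ∀ k, PredLenIn T p k →
      IsNormBlockOf (f x) (x.drop k)) ∧
    (∀ x ∈ T', ∀ x' ∈ T', listLt x' x → (∀ w ∈ T', listLt w x → w <+: x') →
      ∃ b : List X, IsNormBlockOf b (x.drop x'.length) ∧ f x = f x' ++ b)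

/- ## Schauder bases, block basis trees and the ℓ₁-indices -/

/-- `e` is a Schauder basis of `X`: every `x ∈ X` has a unique representation
`x = ∑ a_i e_i` (convergence of the partial sums in norm). -/
def IsSchauderBasis (e : ℕ → X) : Prop :=
  ∀ x : X, ∃! a : ℕ → ℝ,
    Filter.Tendsto (fun n => ∑ i ∈ Finset.range n, a i • e i) Filter.atTop (nhds x)

/-- A node which is a finite normalized block basis of `(e_i)`:
norm-one vectors with consecutive finite supports. -/
def IsBlockNode (e : ℕ → X) (l : List X) : Prop :=
  l ≠ [] ∧ ∃ (E : Fin l.length → Finset ℕ) (a : ℕ → ℝ),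
    (∀ j, (E j).Nonempty) ∧
    (∀ j₁ j₂ : Fin l.length, j₁ < j₂ → ∀ i₁ ∈ E j₁, ∀ i₂ ∈ E j₂, i₁ < i₂) ∧
    ∀ j, l.get j = ∑ i ∈ E j, a i • e i ∧ ‖l.get j‖ = 1

/-- A node which is a finite normalized block basis of `(e_i)_{i>n}`. -/
def IsBlockNodeFrom (e : ℕ → X) (n : ℕ) (l : List X) : Prop :=
  l ≠ [] ∧ ∃ (E : Fin l.length → Finset ℕ) (a : ℕ → ℝ),
    (∀ j, (E j).Nonempty) ∧
    (∀ j, ∀ i ∈ E j, n < i) ∧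
    (∀ j₁ j₂ : Fin l.length, j₁ < j₂ → ∀ i₁ ∈ E j₁, ∀ i₂ ∈ E j₂, i₁ < i₂) ∧
    ∀ j, l.get j = ∑ i ∈ E j, a i • e i ∧ ‖l.get j‖ = 1

/-- An ℓ₁-`K`-block basis tree on `X` with respect to `(e_i)`. -/
def IsL1KBlockTree (e : ℕ → X) (K : ℝ) (T : Set (List X)) : Prop :=
  IsL1KTree K T ∧ ∀ l ∈ T, IsBlockNode e l

/-- An ℓ₁-`K`-block basis tree on `X` with respect to `(e_i)_{i>n}`. -/
def IsL1KBlockTreeFrom (e : ℕ → X) (n : ℕ) (K : ℝ) (T : Set (List X)) : Prop :=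
  IsL1KTree K T ∧ ∀ l ∈ T, IsBlockNodeFrom e n l

/-- `I_b(X, K)`: the supremum of the orders of ℓ₁-`K`-block basis trees on `X`. -/
noncomputable def blockIndexK (e : ℕ → X) (K : ℝ) : Ordinal.{0} :=
  sSup {o : Ordinal.{0} | ∃ T : Set (List X),
    IsL1KBlockTree e K T ∧ TreeWF listLt T ∧ treeOrder listLt T = o}

/-- `I_b(X)`: the block basis ℓ₁-index of `X` with respect to `(e_i)`. -/
noncomputable def blockIndex (e : ℕ → X) : Ordinal.{0} :=
  sSup {o : Ordinal.{0} | ∃ K : ℝ, 1 ≤ K ∧ o = blockIndexK e K}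

/-- `I_b(X_n, K)`: the index over trees of blocks of `(e_i)_{i>n}`, i.e. the block basis
index of the closed span `X_n` of `(e_i)_{i>n}` with respect to the basis `(e_i)_{i>n}`. -/
noncomputable def blockIndexKFrom (e : ℕ → X) (n : ℕ) (K : ℝ) : Ordinal.{0} :=
  sSup {o : Ordinal.{0} | ∃ T : Set (List X),
    IsL1KBlockTreeFrom e n K T ∧ TreeWF listLt T ∧ treeOrder listLt T = o}

end Banach

/-- `I(X, K)`: the supremum of the orders of ℓ₁-`K`-trees on `X`. -/
noncomputable def l1IndexK (X : Type*) [NormedAddCommGroup X] [NormedSpace ℝ X]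
    (K : ℝ) : Ordinal.{0} :=
  sSup {o : Ordinal.{0} | ∃ T : Set (List X),
    IsL1KTree K T ∧ TreeWF listLt T ∧ treeOrder listLt T = o}

/-- `I(X)`: the Bourgain ℓ₁-index of `X`. -/
noncomputable def l1Index (X : Type*) [NormedAddCommGroup X] [NormedSpace ℝ X] :
    Ordinal.{0} :=
  sSup {o : Ordinal.{0} | ∃ K : ℝ, 1 ≤ K ∧ o = l1IndexK X K}

/-- `X` contains a sequence of norm-one vectors equivalent to the unit vector basis of
`ℓ₁`, i.e. `X` contains a subspace isomorphic to `ℓ₁`. -/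
def ContainsL1 (X : Type*) [NormedAddCommGroup X] [NormedSpace ℝ X] : Prop :=
  ∃ x : ℕ → X, (∀ n, ‖x n‖ = 1) ∧ ∃ c : ℝ, 0 < c ∧
    ∀ (n : ℕ) (a : Fin n → ℝ), c * (∑ i, |a i|) ≤ ‖∑ i, a i • x i.1‖
/- ## Schreier families and ℓ₁-spreading models -/

/-- `F ∈ S₁`: the Schreier family, `|F| ≤ min F` (the empty set belongs vacuously). -/
def InS1 (F : Finset ℕ) : Prop := ∀ m ∈ F, F.card ≤ m

/-- `F ∈ S₂ = S₁[S₁]`: `F = F₁ ∪ … ∪ F_k` with each `F_i ∈ S₁`, `F₁ < … < F_k`, and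
`{m₁ < … < m_k} ∈ S₁` with `m₁ ≤ F₁ < m₂ ≤ F₂ < … < m_k ≤ F_k`. -/
def InS2 (F : Finset ℕ) : Prop :=
  F = ∅ ∨ ∃ (k : ℕ) (_ : 0 < k) (G : Fin k → Finset ℕ) (m : Fin k → ℕ),
    (∀ i, InS1 (G i)) ∧
    (∀ i j : Fin k, i < j → ∀ a ∈ G i, ∀ b ∈ G j, a < b) ∧
    StrictMono m ∧
    InS1 (Finset.image m Finset.univ) ∧
    (∀ i, ∀ a ∈ G i, m i ≤ a) ∧
    (∀ i j : Fin k, i < j → ∀ a ∈ G i, a < m j) ∧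
    F = Finset.univ.biUnion G

section SM

variable {X : Type*} [NormedAddCommGroup X] [NormedSpace ℝ X]

/-- `(x_i)_{i ∈ F}` is `K`-equivalent to the unit vector basis of `ℓ₁^{|F|}`. -/
def L1EquivOn (K : ℝ) (x : ℕ → X) (F : Finset ℕ) : Prop :=
  ∃ c C : ℝ, 0 < c ∧ 0 < C ∧ C / c ≤ K ∧
    ∀ a : ℕ → ℝ,
      c * (∑ i ∈ F, |a i|) ≤ ‖∑ i ∈ F, a i • x i‖ ∧
        ‖∑ i ∈ F, a i • x i‖ ≤ C * (∑ i ∈ F, |a i|)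

/-- A normalized basic sequence: norm-one vectors forming a Schauder basis of their
closed linear span (characterized by the uniform boundedness of the projections). -/
def IsNormalizedBasic (x : ℕ → X) : Prop :=
  (∀ n, ‖x n‖ = 1) ∧ ∃ C : ℝ, 1 ≤ C ∧ ∀ m n : ℕ, m ≤ n → ∀ a : ℕ → ℝ,
    ‖∑ i ∈ Finset.range m, a i • x i‖ ≤ C * ‖∑ i ∈ Finset.range n, a i • x i‖

/- ## Helpers for Tsirelson's space -/

/-- The vector `∑ a_i e_i` of `X` associated to a finitely supported family of reals. -/
noncomputable def finsuppVec (e : ℕ → X) (a : ℕ →₀ ℝ) : X := a.sum fun i c => c • e i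

end SM

/-- The restriction `Ea` of a finitely supported family to a finite set of coordinates. -/
noncomputable def restrictTo (E : Finset ℕ) (a : ℕ →₀ ℝ) : ℕ →₀ ℝ :=
  ∑ i ∈ E, Finsupp.single i (a i)

/-- `(E_i)₁ⁿ` is `S₁`-admissible: `E₁ < … < E_n` nonempty finite sets with
`(min E_i)₁ⁿ ∈ S₁`, i.e. `n ≤ min E₁`. -/
def S1Admissible {n : ℕ} (E : Fin n → Finset ℕ) : Prop :=
  0 < n ∧ (∀ i, (E i).Nonempty) ∧
    (∀ i j : Fin n, i < j → ∀ a ∈ E i, ∀ b ∈ E j, a < b) ∧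
    (∀ i : Fin n, ∀ a ∈ E i, n ≤ a)


section AuxA
variable {σ : Type*} {lt : σ → σ → Prop} {T S : Set σ}

theorem derivIter_zero (lt : σ → σ → Prop) (T : Set σ) : derivIter lt T 0 = T :=
  Ordinal.limitRecOn_zero ..

theorem derivIter_succ (lt : σ → σ → Prop) (T : Set σ) (o : Ordinal.{0}) :
    derivIter lt T (o + 1) = derivSet lt (derivIter lt T o) := by
  unfold derivIter
  rw [Ordinal.add_one_eq_succ, Ordinal.limitRecOn_succ]

theorem derivIter_limit (lt : σ → σ → Prop) (T : Set σ) {o : Ordinal.{0}} (h : Order.IsSuccLimit o) :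
    derivIter lt T o = ⋂ (o' : Ordinal.{0}) (_ : o' < o), derivIter lt T o' := by
  unfold derivIter
  rw [Ordinal.limitRecOn_limit _ _ _ _ h]

theorem derivSet_subset (lt : σ → σ → Prop) (T : Set σ) : derivSet lt T ⊆ T :=
  fun _ hx => hx.1

theorem derivSet_mono (lt : σ → σ → Prop) (h : T ⊆ S) : derivSet lt T ⊆ derivSet lt S :=
  fun x hx => ⟨h hx.1, hx.2.imp fun y hy => ⟨h hy.1, hy.2⟩⟩

theorem derivIter_mono (lt : σ → σ → Prop) (h : T ⊆ S) (o : Ordinal.{0}) :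
    derivIter lt T o ⊆ derivIter lt S o := by
  induction o using Ordinal.induction with
  | _ o IH =>
    rcases Ordinal.zero_or_succ_or_isSuccLimit o with rfl | ⟨a, rfl⟩ | hl
    · rw [derivIter_zero, derivIter_zero]; exact h
    · rw [← Ordinal.add_one_eq_succ, derivIter_succ, derivIter_succ]
      exact derivSet_mono lt (IH a (by rw [← Ordinal.add_one_eq_succ]; exact lt_add_one a))
    · rw [derivIter_limit lt T hl, derivIter_limit lt S hl]
      exact Set.iInter₂_mono fun o' ho' => IH o' ho'

theorem derivIter_subset (lt : σ → σ → Prop) (T : Set σ) (o : Ordinal.{0}) :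
    derivIter lt T o ⊆ T := by
  induction o using Ordinal.induction with
  | _ o IH =>
    rcases Ordinal.zero_or_succ_or_isSuccLimit o with rfl | ⟨a, rfl⟩ | hl
    · rw [derivIter_zero]
    · rw [← Ordinal.add_one_eq_succ, derivIter_succ]
      exact (derivSet_subset ..).trans (IH a (by rw [← Ordinal.add_one_eq_succ]; exact lt_add_one a))
    · rw [derivIter_limit lt T hl]
      intro x hx
      have := Set.mem_iInter₂.1 hx 0 hl.pos
      rwa [derivIter_zero] at this

theorem derivIter_antitone (lt : σ → σ → Prop) (T : Set σ) {o₁ o₂ : Ordinal.{0}} (h : o₁ ≤ o₂) :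
    derivIter lt T o₂ ⊆ derivIter lt T o₁ := by
  induction o₂ using Ordinal.induction generalizing o₁ with
  | _ o₂ IH =>
    rcases eq_or_lt_of_le h with rfl | hlt
    · exact subset_rfl
    rcases Ordinal.zero_or_succ_or_isSuccLimit o₂ with rfl | ⟨a, rfl⟩ | hl
    · exact absurd hlt (not_lt_of_ge zero_le)
    · rw [← Ordinal.add_one_eq_succ, derivIter_succ]
      have h1 : o₁ ≤ a := by
        rwa [Order.lt_succ_iff] at hlt
      exact (derivSet_subset ..).trans (IH a (by rw [← Ordinal.add_one_eq_succ]; exact lt_add_one a) h1)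
    · rw [derivIter_limit lt T hl]
      exact Set.iInter₂_subset o₁ hlt

theorem derivIter_add_nat {X : Type*} {T : Set (List X)} {γ : Ordinal.{0}} {k : ℕ}
    {x : List X} (hx : x ∈ derivIter listLt T (γ + k)) :
    ∃ y ∈ derivIter listLt T γ, x <+: y ∧ x.length + k ≤ y.length := by
  induction k generalizing x with
  | zero => exact ⟨x, by simpa using hx, List.prefix_rfl, by simp⟩
  | succ k IH =>
    have : x ∈ derivSet listLt (derivIter listLt T (γ + k)) := by
      rw [← derivIter_succ]
      convert hx using 2
      push_cast
      rw [add_assoc]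
    obtain ⟨hx', y', hy', hlt⟩ := this
    obtain ⟨y, hy, hpre, hlen⟩ := IH hy'
    refine ⟨y, hy, hlt.1.trans hpre, ?_⟩
    have h1 : x.length < y'.length := by
      rcases lt_or_eq_of_le hlt.1.length_le with h | h
      · exact h
      · exact absurd (List.IsPrefix.eq_of_length hlt.1 h) hlt.2
    omega

end AuxA

section AuxB
variable {X : Type u}

theorem listLt_trans_prefix {x y : List X} (h : listLt x y) : x <+: y := h.1

theorem listLt_length {x y : List X} (h : listLt x y) : x.length < y.length := by
  rcases lt_or_eq_of_le h.1.length_le with h' | h'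
  · exact h'
  · exact absurd (List.IsPrefix.eq_of_length h.1 h') h.2

theorem not_listLt_nil {x : List X} : ¬ listLt x ([] : List X) := by
  intro h
  have := listLt_length h
  simp at this

theorem derivIter_insert_nil {T : Set (List X)} (h0 : ([] : List X) ∉ T) :
    ∀ γ : Ordinal.{0}, (∀ γ' < γ, derivIter listLt T γ' ≠ ∅) →
      derivIter listLt (insert [] T) γ = insert [] (derivIter listLt T γ) := by
  intro γ
  induction γ using Ordinal.induction with
  | _ γ IH =>
    intro hne
    rcases Ordinal.zero_or_succ_or_isSuccLimit γ with rfl | ⟨a, rfl⟩ | hl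
    · rw [derivIter_zero, derivIter_zero]
    · rw [← Ordinal.add_one_eq_succ] at *
      have ha : a < a + 1 := lt_add_one a
      rw [derivIter_succ, derivIter_succ, IH a ha (fun γ' hγ' => hne γ' (hγ'.trans ha))]
      ext x
      constructor
      · rintro ⟨hx, y, hy, hxy⟩
        rcases Set.mem_insert_iff.1 hx with rfl | hx'
        · exact Set.mem_insert _ _
        · rcases Set.mem_insert_iff.1 hy with rfl | hy'
          · exact absurd hxy not_listLt_nil
          · exact Set.mem_insert_of_mem _ ⟨hx', y, hy', hxy⟩
      · rintro hx
        rcases Set.mem_insert_iff.1 hx with rfl | hx'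
        · obtain ⟨y, hy⟩ := Set.nonempty_iff_ne_empty.2 (hne a ha)
          refine ⟨Set.mem_insert _ _, y, Set.mem_insert_of_mem _ hy, List.nil_prefix, ?_⟩
          rintro rfl
          exact h0 (derivIter_subset _ _ _ hy)
        · exact ⟨Set.mem_insert_of_mem _ hx'.1, hx'.2.imp fun y hy => ⟨Set.mem_insert_of_mem _ hy.1, hy.2⟩⟩
    · rw [derivIter_limit _ _ hl, derivIter_limit _ _ hl]
      ext x
      simp only [Set.mem_iInter, Set.mem_insert_iff]
      constructor
      · intro hx
        by_cases hx0 : x = []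
        · exact Or.inl hx0
        · refine Or.inr fun γ' hγ' => ?_
          have := hx γ' hγ'
          rw [IH γ' hγ' (fun γ'' hγ'' => hne γ'' (hγ''.trans hγ'))] at this
          rcases Set.mem_insert_iff.1 this with h | h
          · exact absurd h hx0
          · exact h
      · intro hx γ' hγ'
        rw [IH γ' hγ' (fun γ'' hγ'' => hne γ'' (hγ''.trans hγ'))]
        rcases hx with rfl | hx
        · exact Set.mem_insert _ _
        · exact Set.mem_insert_of_mem _ (hx γ' hγ')

theorem derivIter_insert_nil_subset {T : Set (List X)} :
    ∀ γ : Ordinal.{0}, derivIter listLt (insert [] T) γ ⊆ insert [] (derivIter listLt T γ) := by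
  intro γ
  induction γ using Ordinal.induction with
  | _ γ IH =>
    rcases Ordinal.zero_or_succ_or_isSuccLimit γ with rfl | ⟨a, rfl⟩ | hl
    · rw [derivIter_zero, derivIter_zero]
    · rw [← Ordinal.add_one_eq_succ] at *
      have ha : a < a + 1 := lt_add_one a
      rw [derivIter_succ, derivIter_succ]
      intro x hx
      have hx' := derivSet_mono _ (IH a ha) hx
      obtain ⟨hx1, y, hy1, hy2⟩ := hx'
      rcases Set.mem_insert_iff.1 hx1 with rfl | hx1'
      · exact Set.mem_insert _ _
      · rcases Set.mem_insert_iff.1 hy1 with rfl | hy1'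
        · exact absurd hy2 not_listLt_nil
        · exact Set.mem_insert_of_mem _ ⟨hx1', y, hy1', hy2⟩
    · rw [derivIter_limit _ _ hl, derivIter_limit _ _ hl]
      intro x hx
      by_cases hx0 : x = []
      · exact Or.inl hx0
      simp only [Set.mem_iInter] at hx ⊢
      refine Set.mem_insert_of_mem _ ?_
      simp only [Set.mem_iInter]
      intro γ' hγ'
      have := IH γ' hγ' (hx γ' hγ')
      rcases Set.mem_insert_iff.1 this with h | h
      · exact absurd h hx0
      · exact h

/-- derivIter commutes with cons image. -/
theorem derivIter_cons_image (y₀ : X) (S : Set (List X)) :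
    ∀ γ : Ordinal.{0}, derivIter listLt ((y₀ :: ·) '' S) γ = (y₀ :: ·) '' (derivIter listLt S γ) := by
  have hiff : ∀ x y : List X, listLt (y₀ :: x) (y₀ :: y) ↔ listLt x y := by
    intro x y
    unfold listLt
    rw [List.cons_prefix_cons]
    simp
  intro γ
  induction γ using Ordinal.induction with
  | _ γ IH =>
    rcases Ordinal.zero_or_succ_or_isSuccLimit γ with rfl | ⟨a, rfl⟩ | hl
    · rw [derivIter_zero, derivIter_zero]
    · rw [← Ordinal.add_one_eq_succ] at *
      have ha : a < a + 1 := lt_add_one a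
      rw [derivIter_succ, derivIter_succ, IH a ha]
      ext x
      constructor
      · rintro ⟨⟨x', hx', rfl⟩, y, ⟨y', hy', rfl⟩, hxy⟩
        exact ⟨x', ⟨hx', y', hy', (hiff _ _).1 hxy⟩, rfl⟩
      · rintro ⟨x', ⟨hx', y', hy', hxy⟩, rfl⟩
        exact ⟨⟨x', hx', rfl⟩, y₀ :: y', ⟨y', hy', rfl⟩, (hiff _ _).2 hxy⟩
    · rw [derivIter_limit _ _ hl]
      ext x
      simp only [Set.mem_iInter]
      constructor
      · intro hx
        obtain ⟨x', hx', rfl⟩ := by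
          have := hx 0 hl.pos
          rw [IH 0 hl.pos] at this
          exact this
        refine ⟨x', ?_, rfl⟩
        rw [derivIter_limit _ _ hl]
        simp only [Set.mem_iInter]
        intro γ' hγ'
        have := hx γ' hγ'
        rw [IH γ' hγ'] at this
        obtain ⟨x'', hx'', heq⟩ := this
        have : x'' = x' := by
          injection heq
        rwa [← this]
      · rintro ⟨x', hx', rfl⟩ γ' hγ'
        rw [IH γ' hγ']
        rw [derivIter_limit _ _ hl] at hx'
        simp only [Set.mem_iInter] at hx'
        exact ⟨x', hx' γ' hγ', rfl⟩

/-- derivIter of union of "chain-disjoint" pieces. -/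
theorem derivIter_iUnion (S : ℕ → Set (List X))
    (hdisj : ∀ k k' : ℕ, k ≠ k' → ∀ x ∈ S k, ∀ y ∈ S k', ¬ x <+: y) :
    ∀ γ : Ordinal.{0}, derivIter listLt (⋃ k, S k) γ = ⋃ k, derivIter listLt (S k) γ := by
  intro γ
  induction γ using Ordinal.induction with
  | _ γ IH =>
    rcases Ordinal.zero_or_succ_or_isSuccLimit γ with rfl | ⟨a, rfl⟩ | hl
    · rw [derivIter_zero]
      simp [derivIter_zero]
    · rw [← Ordinal.add_one_eq_succ] at *
      have ha : a < a + 1 := lt_add_one a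
      rw [derivIter_succ, IH a ha]
      ext x
      simp only [Set.mem_iUnion]
      constructor
      · rintro ⟨hx, y, hy, hxy⟩
        obtain ⟨k, hk⟩ := Set.mem_iUnion.1 hx
        obtain ⟨k', hk'⟩ := Set.mem_iUnion.1 hy
        have hkk : k = k' := by
          by_contra hne
          exact hdisj k k' hne x (derivIter_subset _ _ _ hk) y (derivIter_subset _ _ _ hk') hxy.1
        subst hkk
        refine ⟨k, ?_⟩
        rw [derivIter_succ]
        exact ⟨hk, y, hk', hxy⟩
      · rintro ⟨k, hk⟩
        rw [derivIter_succ] at hk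
        obtain ⟨hk1, y, hy1, hy2⟩ := hk
        exact ⟨Set.mem_iUnion.2 ⟨k, hk1⟩, y, Set.mem_iUnion.2 ⟨k, hy1⟩, hy2⟩
    · rw [derivIter_limit _ _ hl]
      ext x
      simp only [Set.mem_iInter, Set.mem_iUnion]
      constructor
      · intro hx
        obtain ⟨k, hk⟩ := by
          have := hx 0 hl.pos
          rw [IH 0 hl.pos] at this
          exact Set.mem_iUnion.1 this
        rw [derivIter_zero] at hk
        refine ⟨k, ?_⟩
        rw [derivIter_limit _ _ hl]
        simp only [Set.mem_iInter]
        intro γ' hγ'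
        have := hx γ' hγ'
        rw [IH γ' hγ'] at this
        obtain ⟨k', hk'⟩ := Set.mem_iUnion.1 this
        have : k' = k := by
          by_contra hne
          exact hdisj k' k hne x (derivIter_subset _ _ _ hk') x hk List.prefix_rfl
        rwa [← this]
      · rintro ⟨k, hk⟩ γ' hγ'
        rw [IH γ' hγ']
        rw [derivIter_limit _ _ hl] at hk
        simp only [Set.mem_iInter] at hk
        exact Set.mem_iUnion.2 ⟨k, hk γ' hγ'⟩

/-- An infinite pairwise comparable subset survives all derivatives. -/
theorem chain_subset_derivIter {S C : Set (List X)} (hCS : C ⊆ S) (hinf : C.Infinite)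
    (hcomp : ∀ x ∈ C, ∀ y ∈ C, x ≠ y → listLt x y ∨ listLt y x) :
    ∀ γ : Ordinal.{0}, C ⊆ derivIter listLt S γ := by
  have hext : ∀ x ∈ C, ∃ y ∈ C, listLt x y := by
    intro x hx
    have hfin : {y : List X | y <+: x}.Finite := by
      apply Set.Finite.subset (Set.finite_range (fun n : Fin (x.length + 1) => x.take n.1))
      intro y hy
      exact ⟨⟨y.length, by have := List.IsPrefix.length_le hy; omega⟩,
        (List.prefix_iff_eq_take.1 hy).symm⟩
    obtain ⟨y, hyC, hy⟩ := (hinf.diff hfin).nonempty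
    refine ⟨y, hyC, ?_⟩
    have hxy : x ≠ y := by
      rintro rfl
      exact hy List.prefix_rfl
    rcases hcomp x hx y hyC hxy with h | h
    · exact h
    · exact absurd h.1 hy
  intro γ
  induction γ using Ordinal.induction with
  | _ γ IH =>
    rcases Ordinal.zero_or_succ_or_isSuccLimit γ with rfl | ⟨a, rfl⟩ | hl
    · rw [derivIter_zero]; exact hCS
    · rw [← Ordinal.add_one_eq_succ] at *
      rw [derivIter_succ]
      intro x hx
      obtain ⟨y, hyC, hy⟩ := hext x hx
      exact ⟨IH a (lt_add_one a) hx, y, IH a (lt_add_one a) hyC, hy⟩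
    · rw [derivIter_limit _ _ hl]
      intro x hx
      simp only [Set.mem_iInter]
      exact fun γ' hγ' => IH γ' hγ' hx

theorem treeWF_of_derivIter_empty {S : Set (List X)} {γ : Ordinal.{0}}
    (h : derivIter listLt S γ = ∅) : TreeWF listLt S := by
  rintro ⟨C, hCS, hinf, hcomp⟩
  obtain ⟨x, hx⟩ := hinf.nonempty
  have := chain_subset_derivIter hCS hinf hcomp γ hx
  rw [h] at this
  exact this

end AuxB


section AuxC
variable {X : Type u} [NormedAddCommGroup X] [NormedSpace ℝ X]
variable {e : ℕ → X}

noncomputable def scoeff (he : IsSchauderBasis e) (x : X) : ℕ → ℝ :=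
  Classical.choose (he x).exists

theorem scoeff_spec (he : IsSchauderBasis e) (x : X) :
    Filter.Tendsto (fun n => ∑ i ∈ Finset.range n, scoeff he x i • e i) Filter.atTop (nhds x) :=
  Classical.choose_spec (he x).exists

theorem scoeff_unique (he : IsSchauderBasis e) {x : X} {a : ℕ → ℝ}
    (ha : Filter.Tendsto (fun n => ∑ i ∈ Finset.range n, a i • e i) Filter.atTop (nhds x)) :
    a = scoeff he x :=
  (he x).unique ha (scoeff_spec he x)

theorem scoeff_add (he : IsSchauderBasis e) (x y : X) :
    scoeff he (x + y) = fun j => scoeff he x j + scoeff he y j := by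
  symm
  apply scoeff_unique he
  have := (scoeff_spec he x).add (scoeff_spec he y)
  convert this using 2 with n
  rw [← Finset.sum_add_distrib]
  congr 1 with i
  rw [add_smul]

theorem scoeff_smul (he : IsSchauderBasis e) (r : ℝ) (x : X) :
    scoeff he (r • x) = fun j => r * scoeff he x j := by
  symm
  apply scoeff_unique he
  have := (scoeff_spec he x).const_smul r
  convert this using 1
  funext n
  rw [Finset.smul_sum]
  exact Finset.sum_congr rfl fun i _ => (smul_smul r (scoeff he x i) (e i)).symm

theorem scoeff_finsum (he : IsSchauderBasis e) {ι : Type*} [DecidableEq ι] (s : Finset ι) (c : ι → ℝ) (z : ι → X) (j : ℕ) :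
    scoeff he (∑ i ∈ s, c i • z i) j = ∑ i ∈ s, c i * scoeff he (z i) j := by
  induction s using Finset.induction with
  | empty =>
    simp only [Finset.sum_empty]
    have h0 : scoeff he (0 : X) = fun _ => (0 : ℝ) := by
      symm
      apply scoeff_unique he
      simp only [zero_smul, Finset.sum_const_zero]
      exact tendsto_const_nhds
    rw [h0]
  | @insert i₀ s₀ hni IH =>
    rw [Finset.sum_insert hni, Finset.sum_insert hni, scoeff_add he, ← IH]
    simp only [scoeff_smul he]

/-- Finite linear independence of a Schauder basis. -/
theorem schauder_linIndep (he : IsSchauderBasis e) (F : Finset ℕ) (φ : ℕ → ℝ)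
    (h : ∑ i ∈ F, φ i • e i = 0) : ∀ i ∈ F, φ i = 0 := by
  set a : ℕ → ℝ := fun i => if i ∈ F then φ i else 0 with ha
  have key : a = scoeff he 0 := by
    apply scoeff_unique he
    apply Filter.Tendsto.congr' _ (tendsto_const_nhds (x := (0:X)))
    filter_upwards [Filter.eventually_ge_atTop ((F.sup id) + 1)] with n hn
    have hsub : F ⊆ Finset.range n := by
      intro i hi
      have : i ≤ F.sup id := Finset.le_sup (f := id) hi
      exact Finset.mem_range.2 (by omega)
    have : ∑ i ∈ Finset.range n, a i • e i = ∑ i ∈ F, φ i • e i := by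
      rw [ha]
      simp only [ite_smul, zero_smul]
      rw [Finset.sum_ite_mem, Finset.inter_comm, Finset.inter_eq_left.2 hsub]
    rw [h] at this
    exact this.symm
  have hz : scoeff he (0 : X) = fun _ => (0:ℝ) := by
    symm
    apply scoeff_unique he
    simp only [zero_smul, Finset.sum_const_zero]
    exact tendsto_const_nhds
  intro i hi
  have := congrFun key i
  rw [hz] at this
  simpa [ha, hi] using this

theorem schauder_e_ne_zero (he : IsSchauderBasis e) (i : ℕ) : e i ≠ 0 := by
  intro h
  have := schauder_linIndep he {i} (fun _ => (1:ℝ)) (by simp [h])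
  simpa using this i (Finset.mem_singleton_self i)

/-- Two nonzero vectors with finite representations over disjoint index sets differ. -/
theorem disjoint_rep_ne (he : IsSchauderBasis e) {F G : Finset ℕ} (hFG : Disjoint F G)
    {b b' : ℕ → ℝ} {y : X}
    (hy : y = ∑ i ∈ F, b i • e i) (hy' : y = ∑ i ∈ G, b' i • e i) (hny : y ≠ 0) : False := by
  classical
  have h : ∑ i ∈ F ∪ G, (if i ∈ F then b i else -b' i) • e i = 0 := by
    rw [Finset.sum_union hFG]
    have h1 : ∑ i ∈ F, (if i ∈ F then b i else -b' i) • e i = y := by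
      rw [hy]; exact Finset.sum_congr rfl fun i hi => by rw [if_pos hi]
    have h2 : ∑ i ∈ G, (if i ∈ F then b i else -b' i) • e i = -y := by
      rw [hy', ← Finset.sum_neg_distrib]
      exact Finset.sum_congr rfl fun i hi => by
        rw [if_neg (Finset.disjoint_right.1 hFG hi), neg_smul]
    rw [h1, h2, add_neg_cancel]
  have hall := schauder_linIndep he (F ∪ G) _ h
  apply hny
  rw [hy]
  apply Finset.sum_eq_zero
  intro i hi
  have := hall i (Finset.mem_union_left _ hi)
  rw [if_pos hi] at this
  rw [this, zero_smul]

/-- Linear dependence of coefficient vectors. -/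
theorem exists_combo (he : IsSchauderBasis e) (n m : ℕ) (hm : n < m) (z : Fin m → X) :
    ∃ t : Fin m → ℝ, (∑ i, |t i|) = 1 ∧ ∀ j < n, ∑ i, t i * scoeff he (z i) j = 0 := by
  set v : Fin m → (Fin n → ℝ) := fun i j => scoeff he (z i) j.1 with hv
  have hnli : ¬ LinearIndependent ℝ v := by
    intro hli
    have := hli.fintype_card_le_finrank
    rw [Module.finrank_fin_fun, Fintype.card_fin] at this
    omega
  obtain ⟨g, hg, i₀, hi₀⟩ := Fintype.not_linearIndependent_iff.1 hnli
  set s : ℝ := ∑ i, |g i| with hs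
  have hspos : 0 < s := by
    apply lt_of_lt_of_le (abs_pos.2 hi₀)
    exact Finset.single_le_sum (f := fun i => |g i|) (fun i _ => abs_nonneg _) (Finset.mem_univ i₀)
  refine ⟨fun i => g i / s, ?_, ?_⟩
  · simp only [abs_div, abs_of_pos hspos]
    rw [← Finset.sum_div, ← hs, div_self hspos.ne']
  · intro j hj
    have := congrFun hg ⟨j, hj⟩
    simp only [Finset.sum_apply, Pi.smul_apply, _root_.smul_eq_mul, Pi.zero_apply, hv] at this
    have : ∑ i, g i * scoeff he (z i) j = 0 := this
    have heq : ∑ i, g i / s * scoeff he (z i) j = (∑ i, g i * scoeff he (z i) j) / s := by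
      rw [Finset.sum_div]
      exact Finset.sum_congr rfl fun i _ => by ring
    rw [heq, this, _root_.zero_div]

/-- Far-out finitely supported approximation of a vector with vanishing low coefficients. -/
theorem exists_partial_sum (he : IsSchauderBasis e) (w : X) (d : ℕ) (hc : ∀ j < d, scoeff he w j = 0)
    {δ : ℝ} (hδ : 0 < δ) :
    ∃ M, d < M ∧ ‖(∑ i ∈ Finset.Ico d M, scoeff he w i • e i) - w‖ ≤ δ := by
  have := (Metric.tendsto_atTop.1 (scoeff_spec he w)) δ hδ
  obtain ⟨N, hN⟩ := this
  refine ⟨max (d+1) N, by omega, ?_⟩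
  have hd : d ≤ max (d+1) N := by omega
  rw [Finset.sum_Ico_eq_sub _ hd]
  have hz : ∑ i ∈ Finset.range d, scoeff he w i • e i = 0 := by
    apply Finset.sum_eq_zero
    intro i hi
    rw [hc i (Finset.mem_range.1 hi), zero_smul]
  rw [hz, _root_.sub_zero]
  have := hN (max (d+1) N) (le_max_right _ _)
  rw [dist_eq_norm] at this
  exact this.le

end AuxC


section AuxD
variable {X : Type u} [NormedAddCommGroup X] [NormedSpace ℝ X]

theorem l1node_norm_le {l : List X} (hn : ∀ z ∈ l, ‖z‖ = 1) (B : ℕ → ℝ) :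
    ‖∑ i ∈ Finset.range l.length, B i • l.getD i 0‖ ≤ ∑ i ∈ Finset.range l.length, |B i| := by
  refine (norm_sum_le _ _).trans ?_
  apply Finset.sum_le_sum
  intro i hi
  rw [norm_smul, Real.norm_eq_abs]
  have h1 : ‖l.getD i 0‖ = 1 := by
    rw [List.getD_eq_getElem l 0 (Finset.mem_range.1 hi)]
    exact hn _ (List.getElem_mem _)
  rw [h1, mul_one]

theorem l1node_lower {K : ℝ} {l : List X} (hl : IsL1Node K l) (hne : l ≠ []) (B : ℕ → ℝ) :
    K⁻¹ * (∑ i ∈ Finset.range l.length, |B i|) ≤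
      ‖∑ i ∈ Finset.range l.length, B i • l.getD i 0‖ := by
  classical
  obtain ⟨hn, c, C, hc, hC, hKc, hineq⟩ := hl
  have hpos : 0 < l.length := List.length_pos_iff.2 hne
  have hfin : ∀ (B : ℕ → ℝ), ∑ i : Fin l.length, B i.1 • l.get i
      = ∑ i ∈ Finset.range l.length, B i • l.getD i 0 := by
    intro B
    rw [← Fin.sum_univ_eq_sum_range (fun i => B i • l.getD i 0) l.length]
    apply Finset.sum_congr rfl
    intro i _
    congr 1
    rw [List.getD_eq_getElem l 0 i.2, List.get_eq_getElem]
  -- bounds on c, C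
  set i₀ : Fin l.length := ⟨0, hpos⟩
  have htest := hineq (fun i => if i = i₀ then (1:ℝ) else 0)
  have hsum1 : ∑ i : Fin l.length, |if i = i₀ then (1:ℝ) else 0| = 1 := by
    simp only [apply_ite abs, abs_one, abs_zero]
    rw [Finset.sum_ite_eq' Finset.univ i₀ (fun _ => (1:ℝ))]
    simp
  have hvec1 : ∑ i : Fin l.length, (if i = i₀ then (1:ℝ) else 0) • l.get i = l.get i₀ := by
    simp only [ite_smul, one_smul, zero_smul]
    rw [Finset.sum_ite_eq' Finset.univ i₀ (fun i => l.get i)]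
    simp
  rw [hsum1, hvec1] at htest
  have hni₀ : ‖l.get i₀‖ = 1 := hn _ (List.get_mem l i₀)
  rw [hni₀] at htest
  have hc1 : c ≤ 1 := by linarith [htest.1]
  have hC1 : 1 ≤ C := by linarith [htest.2]
  have hKpos : 0 < K := lt_of_lt_of_le (div_pos hC hc) hKc
  have hcK : K⁻¹ ≤ c := by
    rw [div_le_iff₀ hc] at hKc
    rw [inv_le_iff_one_le_mul₀ hKpos]
    nlinarith
  have := (hineq (fun i => B i.1)).1
  rw [hfin] at this
  have habs : ∑ i : Fin l.length, |B i.1| = ∑ i ∈ Finset.range l.length, |B i| :=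
    Fin.sum_univ_eq_sum_range (fun i => |B i|) l.length
  rw [habs] at this
  refine le_trans ?_ this
  apply mul_le_mul_of_nonneg_right hcK
  exact Finset.sum_nonneg fun i _ => abs_nonneg _

theorem chunk_w_norm {K : ℝ} {c : List X} (hc : IsL1Node K c) (hcne : c ≠ [])
    {a : ℕ → ℝ} {lo hi : ℕ} (hhi : hi ≤ c.length)
    (hsum : ∑ i ∈ Finset.Ico lo hi, |a i| = 1) :
    K⁻¹ ≤ ‖∑ i ∈ Finset.Ico lo hi, a i • c.getD i 0‖ ∧
      ‖∑ i ∈ Finset.Ico lo hi, a i • c.getD i 0‖ ≤ 1 := by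
  classical
  set B : ℕ → ℝ := fun i => if i ∈ Finset.Ico lo hi then a i else 0 with hB
  have hIcoSub : Finset.Ico lo hi ⊆ Finset.range c.length := by
    intro i hi'
    rw [Finset.mem_range]
    have := (Finset.mem_Ico.1 hi').2
    omega
  have hBsum : ∑ i ∈ Finset.range c.length, |B i| = 1 := by
    rw [hB]
    simp only [apply_ite abs, abs_zero]
    rw [Finset.sum_ite_mem, Finset.inter_eq_right.2 hIcoSub, hsum]
  have hBvec : ∑ i ∈ Finset.range c.length, B i • c.getD i 0
      = ∑ i ∈ Finset.Ico lo hi, a i • c.getD i 0 := by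
    rw [hB]
    simp only [ite_smul, zero_smul]
    rw [Finset.sum_ite_mem, Finset.inter_eq_right.2 hIcoSub]
  constructor
  · have := l1node_lower hc hcne B
    rw [hBsum, hBvec, mul_one] at this
    exact this
  · have := l1node_norm_le hc.1 B
    rw [hBsum, hBvec] at this
    exact this

/-- The key auxiliary predicate: `ys` is a block node built from δ-perturbed
ℓ₁-averages over consecutive chunks of a chain `c` of `T` extending `x`,
with block supports beyond `n`. -/
def Good (T : Set (List X)) (e : ℕ → X) (δ : ℝ) (x : List X) (n : ℕ) (ys : List X) : Prop :=
  ys ≠ [] ∧ ∃ c ∈ T, x <+: c ∧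
  ∃ (a bb : ℕ → ℝ) (k p q : ℕ → ℕ) (v : ℕ → X),
    x.length ≤ k 0 ∧ (∀ j, k j ≤ k (j+1)) ∧ k ys.length ≤ c.length ∧
    (∀ j, j < ys.length → n < p j ∧ p j < q j) ∧
    (∀ j, j + 1 < ys.length → q j ≤ p (j+1)) ∧
    ∀ j, ∀ hj : j < ys.length,
      (∑ i ∈ Finset.Ico (k j) (k (j+1)), |a i|) = 1 ∧
      ‖v j - ∑ i ∈ Finset.Ico (k j) (k (j+1)), a i • c.getD i 0‖ ≤ δ ∧
      ys.get ⟨j, hj⟩ = ‖v j‖⁻¹ • v j ∧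
      ys.get ⟨j, hj⟩ = ∑ i ∈ Finset.Ico (p j) (q j), bb i • e i

theorem Good_mono_n {T : Set (List X)} {e : ℕ → X} {δ : ℝ} {x : List X} {n n' : ℕ}
    {ys : List X} (hnn : n ≤ n') (hg : Good T e δ x n' ys) : Good T e δ x n ys := by
  obtain ⟨h1, c, hc, hxc, a, bb, k, p, q, v, h2, h3, h4, h5, h6, h7⟩ := hg
  exact ⟨h1, c, hc, hxc, a, bb, k, p, q, v, h2, h3, h4,
    fun j hj => ⟨lt_of_le_of_lt hnn (h5 j hj).1, (h5 j hj).2⟩, h6, h7⟩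

theorem Good_main {T : Set (List X)} {e : ℕ → X} {δ K ε : ℝ} {x : List X} {n : ℕ} {ys : List X}
    (hK : 1 ≤ K) (hε : 0 < ε) (hδ0 : 0 < δ) (hδ1 : δ < K⁻¹)
    (hlow : (K+ε)⁻¹ ≤ (K⁻¹ - δ)/(1+δ))
    (hT1 : ∀ l ∈ T, IsL1Node K l) (hTne : ∀ l ∈ T, l ≠ [])
    (hg : Good T e δ x n ys) : IsL1Node (K+ε) ys ∧ IsBlockNode e ys := by
  classical
  obtain ⟨hysne, c, hcT, hxc, a, bb, k, p, q, v, hk0, hkmono, hklen, hpq, hqp, hdata⟩ := hg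
  have hc1 := hT1 c hcT
  have hcne := hTne c hcT
  have hKpos : (0:ℝ) < K := lt_of_lt_of_le one_pos hK
  set L := ys.length with hL
  have hLpos : 0 < L := List.length_pos_iff.2 hysne
  have hkm : Monotone k := monotone_nat_of_le_succ hkmono
  set w : ℕ → X := fun j => ∑ i ∈ Finset.Ico (k j) (k (j+1)), a i • c.getD i 0 with hw
  have hwb : ∀ j, j < L → K⁻¹ ≤ ‖w j‖ ∧ ‖w j‖ ≤ 1 := by
    intro j hj
    exact chunk_w_norm hc1 hcne (le_trans (hkm (show j+1 ≤ L by omega)) hklen) (hdata j hj).1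
  have hvb : ∀ j, j < L → K⁻¹ - δ ≤ ‖v j‖ ∧ ‖v j‖ ≤ 1 + δ := by
    intro j hj
    have h1 := (hdata j hj).2.1
    have h2 := hwb j hj
    have h3 : ‖w j‖ - ‖v j‖ ≤ ‖v j - w j‖ := by
      rw [norm_sub_rev]
      exact norm_sub_norm_le _ _
    have h4 : ‖v j‖ - ‖w j‖ ≤ ‖v j - w j‖ := norm_sub_norm_le _ _
    constructor <;> linarith
  have hδK : (0:ℝ) < K⁻¹ - δ := by linarith
  have hvpos : ∀ j, j < L → 0 < ‖v j‖ := fun j hj => lt_of_lt_of_le hδK (hvb j hj).1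
  have hys1 : ∀ j, ∀ hj : j < L, ‖ys.get ⟨j, hj⟩‖ = 1 := by
    intro j hj
    rw [(hdata j hj).2.2.1, norm_smul, norm_inv, norm_norm,
      inv_mul_cancel₀ (hvpos j hj).ne']
  have hallnorm : ∀ z ∈ ys, ‖z‖ = 1 := by
    intro z hz
    obtain ⟨i, hi⟩ := List.get_of_mem hz
    rw [← hi]
    exact hys1 i.1 i.2
  constructor
  · -- IsL1Node (K+ε)
    refine ⟨hallnorm, (K+ε)⁻¹, 1, by positivity, one_pos, ?_, ?_⟩
    · rw [one_div, inv_inv]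
    · intro A
      set t : ℕ → ℝ := fun j => if h : j < L then A ⟨j, h⟩ * ‖v j‖⁻¹ else 0 with ht
      have hti : ∀ i : Fin L, t i.1 = A i * ‖v i.1‖⁻¹ := by
        intro i
        rw [ht]
        simp only [i.2, dif_pos, Fin.eta]
      have hsumty : ∑ i : Fin L, A i • ys.get i = ∑ j ∈ Finset.range L, t j • v j := by
        rw [← Fin.sum_univ_eq_sum_range (fun j => t j • v j) L]
        apply Finset.sum_congr rfl
        intro i _
        have hgi := (hdata i.1 i.2).2.2.1
        have : ys.get i = ‖v i.1‖⁻¹ • v i.1 := by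
          rw [← hgi]
        rw [this, smul_smul, hti i]
      set B : ℕ → ℝ :=
        fun i => ∑ j ∈ Finset.range L, if k j ≤ i ∧ i < k (j+1) then t j * a i else 0 with hBdef
      have huniq : ∀ i j₁ j₂, j₁ < L → j₂ < L → (k j₁ ≤ i ∧ i < k (j₁+1)) →
          (k j₂ ≤ i ∧ i < k (j₂+1)) → j₁ = j₂ := by
        intro i j₁ j₂ _ _ h₁ h₂
        by_contra hne
        rcases Nat.lt_or_ge j₁ j₂ with h | h
        · have := hkm (show j₁+1 ≤ j₂ from h)
          omega
        · have hj : j₂ < j₁ := by omega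
          have := hkm (show j₂+1 ≤ j₁ from hj)
          omega
      have hfilter : ∀ j, j < L →
          Finset.filter (fun i => k j ≤ i ∧ i < k (j+1)) (Finset.range c.length)
            = Finset.Ico (k j) (k (j+1)) := by
        intro j hj
        have hkcl : k (j+1) ≤ c.length := le_trans (hkm (show j+1 ≤ L from hj)) hklen
        ext i
        simp only [Finset.mem_filter, Finset.mem_range, Finset.mem_Ico]
        omega
      have hBvec : ∑ i ∈ Finset.range c.length, B i • c.getD i 0
          = ∑ j ∈ Finset.range L, t j • w j := by
        simp only [hBdef]
        simp only [Finset.sum_smul, ite_smul, zero_smul]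
        rw [Finset.sum_comm]
        apply Finset.sum_congr rfl
        intro j hj
        rw [← Finset.sum_filter, hfilter j (Finset.mem_range.1 hj)]
        simp only [hw]
        rw [Finset.smul_sum]
        apply Finset.sum_congr rfl
        intro i _
        rw [mul_smul]
      have hBabs : ∑ i ∈ Finset.range c.length, |B i| = ∑ j ∈ Finset.range L, |t j| := by
        have hper : ∀ i, |B i| = ∑ j ∈ Finset.range L,
            if k j ≤ i ∧ i < k (j+1) then |t j| * |a i| else 0 := by
          intro i
          simp only [hBdef]
          by_cases hex : ∃ j ∈ Finset.range L, k j ≤ i ∧ i < k (j+1)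
          · obtain ⟨j₀, hj₀, hcond⟩ := hex
            have h1 : ∑ j ∈ Finset.range L,
                (if k j ≤ i ∧ i < k (j+1) then t j * a i else 0) = t j₀ * a i := by
              rw [Finset.sum_eq_single_of_mem j₀ hj₀ ?_]
              · rw [if_pos hcond]
              · intro j hj hne
                rw [if_neg]
                intro hcond'
                exact hne (huniq i j j₀ (Finset.mem_range.1 hj) (Finset.mem_range.1 hj₀)
                  hcond' hcond)
            have h2 : ∑ j ∈ Finset.range L,
                (if k j ≤ i ∧ i < k (j+1) then |t j| * |a i| else 0) = |t j₀| * |a i| := by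
              rw [Finset.sum_eq_single_of_mem j₀ hj₀ ?_]
              · rw [if_pos hcond]
              · intro j hj hne
                rw [if_neg]
                intro hcond'
                exact hne (huniq i j j₀ (Finset.mem_range.1 hj) (Finset.mem_range.1 hj₀)
                  hcond' hcond)
            rw [h1, h2, abs_mul]
          · push_neg at hex
            rw [Finset.sum_eq_zero (fun j hj => if_neg (by
              intro hc'
              have := hex j hj hc'.1
              omega)), abs_zero]
            exact (Finset.sum_eq_zero fun j hj => if_neg (by
              intro hc'
              have := hex j hj hc'.1
              omega)).symm
        calc ∑ i ∈ Finset.range c.length, |B i|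
            = ∑ i ∈ Finset.range c.length, ∑ j ∈ Finset.range L,
                (if k j ≤ i ∧ i < k (j+1) then |t j| * |a i| else 0) :=
              Finset.sum_congr rfl fun i _ => hper i
          _ = ∑ j ∈ Finset.range L, ∑ i ∈ Finset.range c.length,
                (if k j ≤ i ∧ i < k (j+1) then |t j| * |a i| else 0) := Finset.sum_comm
          _ = ∑ j ∈ Finset.range L, |t j| := by
              apply Finset.sum_congr rfl
              intro j hj
              rw [← Finset.sum_filter, hfilter j (Finset.mem_range.1 hj), ← Finset.mul_sum,
                (hdata j (Finset.mem_range.1 hj)).1, mul_one]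
      have hlower1 : K⁻¹ * (∑ j ∈ Finset.range L, |t j|)
          ≤ ‖∑ j ∈ Finset.range L, t j • w j‖ := by
        rw [← hBabs, ← hBvec]
        exact l1node_lower hc1 hcne B
      have hdiff : ‖(∑ j ∈ Finset.range L, t j • v j) - ∑ j ∈ Finset.range L, t j • w j‖
          ≤ δ * ∑ j ∈ Finset.range L, |t j| := by
        rw [← Finset.sum_sub_distrib]
        refine (norm_sum_le _ _).trans ?_
        rw [Finset.mul_sum]
        apply Finset.sum_le_sum
        intro j hj
        rw [← smul_sub, norm_smul, Real.norm_eq_abs]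
        calc |t j| * ‖v j - w j‖ ≤ |t j| * δ :=
              mul_le_mul_of_nonneg_left ((hdata j (Finset.mem_range.1 hj)).2.1)
                (abs_nonneg _)
          _ = δ * |t j| := mul_comm _ _
      have hSt0 : 0 ≤ ∑ j ∈ Finset.range L, |t j| :=
        Finset.sum_nonneg fun j _ => abs_nonneg _
      have hnormlb : (K⁻¹ - δ) * (∑ j ∈ Finset.range L, |t j|)
          ≤ ‖∑ i : Fin L, A i • ys.get i‖ := by
        rw [hsumty]
        have h5 : ‖∑ j ∈ Finset.range L, t j • w j‖ - ‖∑ j ∈ Finset.range L, t j • v j‖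
            ≤ ‖(∑ j ∈ Finset.range L, t j • v j) - ∑ j ∈ Finset.range L, t j • w j‖ := by
          rw [norm_sub_rev]
          exact norm_sub_norm_le _ _
        have := hlower1
        nlinarith
      have hSA : (∑ i : Fin L, |A i|) ≤ (1 + δ) * ∑ j ∈ Finset.range L, |t j| := by
        rw [← Fin.sum_univ_eq_sum_range (fun j => |t j|) L, Finset.mul_sum]
        apply Finset.sum_le_sum
        intro i _
        have hv1 : ‖v i.1‖ ≤ 1 + δ := (hvb i.1 i.2).2
        have hv0 : 0 < ‖v i.1‖ := hvpos i.1 i.2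
        have hAi : |A i| = |t i.1| * ‖v i.1‖ := by
          rw [hti i, abs_mul, abs_of_nonneg (inv_nonneg.2 hv0.le)]
          rw [mul_assoc, inv_mul_cancel₀ hv0.ne', mul_one]
        rw [hAi]
        calc |t i.1| * ‖v i.1‖ ≤ |t i.1| * (1+δ) :=
              mul_le_mul_of_nonneg_left hv1 (abs_nonneg _)
          _ = (1+δ) * |t i.1| := mul_comm _ _
      constructor
      · have h1δ : (0:ℝ) < 1 + δ := by linarith
        have hSA0 : 0 ≤ ∑ i : Fin L, |A i| := Finset.sum_nonneg fun i _ => abs_nonneg _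
        calc (K+ε)⁻¹ * ∑ i : Fin L, |A i|
            ≤ ((K⁻¹ - δ)/(1+δ)) * ∑ i : Fin L, |A i| :=
              mul_le_mul_of_nonneg_right hlow hSA0
          _ ≤ ((K⁻¹ - δ)/(1+δ)) * ((1+δ) * ∑ j ∈ Finset.range L, |t j|) := by
              apply mul_le_mul_of_nonneg_left hSA
              positivity
          _ = (K⁻¹ - δ) * ∑ j ∈ Finset.range L, |t j| := by
              field_simp
          _ ≤ ‖∑ i : Fin L, A i • ys.get i‖ := hnormlb
      · refine (norm_sum_le _ _).trans ?_
        rw [one_mul]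
        apply Finset.sum_le_sum
        intro i _
        rw [norm_smul, Real.norm_eq_abs]
        have : ‖ys.get i‖ = 1 := hys1 i.1 i.2
        rw [this, mul_one]
  · -- IsBlockNode
    have hchain : ∀ j₁ j₂, j₁ + 1 ≤ j₂ → j₂ < L → q j₁ ≤ p j₂ := by
      intro j₁ j₂ h12 h2L
      induction j₂, h12 using Nat.le_induction with
      | base => exact hqp j₁ (by omega)
      | succ m hm IH =>
        have h1 : q j₁ ≤ p m := IH (by omega)
        have h2 : p m < q m := (hpq m (by omega)).2
        have h3 : q m ≤ p (m+1) := hqp m (by omega)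
        omega
    refine ⟨hysne, fun j => Finset.Ico (p j.1) (q j.1), bb, ?_, ?_, ?_⟩
    · intro j
      rw [Finset.nonempty_Ico]
      exact (hpq j.1 j.2).2
    · intro j₁ j₂ h12 i₁ hi₁ i₂ hi₂
      have hc12 : q j₁.1 ≤ p j₂.1 := hchain j₁.1 j₂.1 h12 j₂.2
      have h1 := (Finset.mem_Ico.1 hi₁).2
      have h2 := (Finset.mem_Ico.1 hi₂).1
      omega
    · intro j
      exact ⟨(hdata j.1 j.2).2.2.2, hys1 j.1 j.2⟩

end AuxD



section AuxE
variable {X : Type u} [NormedAddCommGroup X] [NormedSpace ℝ X]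

theorem chunk_exists {e : ℕ → X} (he : IsSchauderBasis e) {K δ : ℝ} (hK : 1 ≤ K)
    (hδ0 : 0 < δ) (hδ1 : δ < K⁻¹)
    {T : Set (List X)} (hT1 : ∀ l ∈ T, IsL1Node K l) (hTne : ∀ l ∈ T, l ≠ [])
    {β' : Ordinal.{0}} {x : List X}
    (hx : x ∈ derivIter listLt (insert [] T) (Ordinal.omega0 * β' + Ordinal.omega0)) (n : ℕ) :
    ∃ (c : List X) (y₀ : X) (q : ℕ),
      c ∈ derivIter listLt (insert [] T) (Ordinal.omega0 * β') ∧ c ∈ T ∧ x <+: c ∧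
      x.length < c.length ∧ n + 1 < q ∧
      ∃ (a : ℕ → ℝ) (v : X),
        (∑ i ∈ Finset.Ico x.length c.length, |a i|) = 1 ∧
        ‖v - ∑ i ∈ Finset.Ico x.length c.length, a i • c.getD i 0‖ ≤ δ ∧
        v ≠ 0 ∧ y₀ = ‖v‖⁻¹ • v ∧
        ∃ bb : ℕ → ℝ, v = ∑ i ∈ Finset.Ico (n+1) q, bb i • e i := by
  classical
  have hx2 : x ∈ derivIter listLt (insert [] T) (Ordinal.omega0 * β' + (n+2 : ℕ)) := by
    apply derivIter_antitone listLt _ (add_le_add_right (Ordinal.nat_lt_omega0 (n+2)).le _) hx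
  obtain ⟨c, hc, hxc, hclen⟩ := derivIter_add_nat hx2
  have hcne : c ≠ [] := by
    intro h
    rw [h] at hclen
    simp at hclen
  have hcT : c ∈ T := by
    have := derivIter_subset listLt (insert [] T) _ hc
    rcases Set.mem_insert_iff.1 this with h | h
    · exact absurd h hcne
    · exact h
  have hxltc : x.length < c.length := by omega
  set m : ℕ := c.length - x.length with hm
  have hmn : n + 1 < m := by omega
  set z : Fin m → X := fun i => c.getD (x.length + i.1) 0 with hz
  obtain ⟨t, htsum, htz⟩ := exists_combo he (n+1) m hmn z
  set a : ℕ → ℝ := fun i =>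
    if h : x.length ≤ i ∧ i < c.length then t ⟨i - x.length, by omega⟩ else 0 with ha
  have hreindex : ∀ (f : ℝ → ℝ) (g : Fin m → ℝ), f 0 = 0 →
      (∀ (i : Fin m), g i = f (t i)) →
      ∑ i ∈ Finset.Ico x.length c.length, f (a i) = ∑ i : Fin m, g i := by
    intro f g hf0 hfg
    rw [Finset.sum_Ico_eq_sum_range]
    rw [← Fin.sum_univ_eq_sum_range (fun i => f (a (x.length + i))) (c.length - x.length)]
    apply Finset.sum_congr rfl
    intro i _
    rw [hfg i]
    simp only [ha]
    have hcond : x.length ≤ x.length + i.1 ∧ x.length + i.1 < c.length := by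
      constructor
      · omega
      · have := i.2
        omega
    rw [dif_pos hcond]
    exact congrArg f (congrArg t (Fin.ext (show x.length + i.1 - x.length = i.1 by omega)))
  have hasum : ∑ i ∈ Finset.Ico x.length c.length, |a i| = 1 := by
    rw [hreindex (fun r => |r|) (fun i => |t i|) abs_zero (fun i => rfl), htsum]
  set w : X := ∑ i ∈ Finset.Ico x.length c.length, a i • c.getD i 0 with hw
  have hwcoeff : ∀ j, j < n + 1 → scoeff he w j = 0 := by
    intro j hj
    rw [hw, scoeff_finsum he]
    have : ∑ i ∈ Finset.Ico x.length c.length, a i * scoeff he (c.getD i 0) j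
        = ∑ i : Fin m, t i * scoeff he (z i) j := by
      rw [Finset.sum_Ico_eq_sum_range]
      rw [← Fin.sum_univ_eq_sum_range
        (fun i => a (x.length + i) * scoeff he (c.getD (x.length + i) 0) j) (c.length - x.length)]
      apply Finset.sum_congr rfl
      intro i _
      simp only [hz, ha]
      have hcond : x.length ≤ x.length + i.1 ∧ x.length + i.1 < c.length := by
        constructor
        · omega
        · have := i.2
          omega
      rw [dif_pos hcond]
      congr 1
      exact congrArg t (Fin.ext (show x.length + i.1 - x.length = i.1 by omega))
    rw [this]
    exact htz j hj
  obtain ⟨M, hM1, hM2⟩ := exists_partial_sum he w (n+1) hwcoeff hδ0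
  set v : X := ∑ i ∈ Finset.Ico (n+1) M, scoeff he w i • e i with hv
  have hwn : K⁻¹ ≤ ‖w‖ := (chunk_w_norm (hT1 c hcT) hcne le_rfl hasum).1
  have hvw : ‖v - w‖ ≤ δ := hM2
  have hvn : K⁻¹ - δ ≤ ‖v‖ := by
    have h3 : ‖w‖ - ‖v‖ ≤ ‖v - w‖ := by
      rw [norm_sub_rev]
      exact norm_sub_norm_le _ _
    linarith
  have hvne : v ≠ 0 := by
    intro h
    rw [h, norm_zero] at hvn
    linarith
  exact ⟨c, ‖v‖⁻¹ • v, M, hc, hcT, hxc, hxltc, hM1, a, v, hasum, hvw, hvne, rfl,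
    scoeff he w, rfl⟩

theorem Good_single {e : ℕ → X} {δ : ℝ} {T : Set (List X)} {x c : List X} {y₀ : X}
    {n q : ℕ} (hcT : c ∈ T) (hxc : x <+: c) (hxlen : x.length < c.length)
    (hq : n + 1 < q)
    {a : ℕ → ℝ} {v : X}
    (hasum : (∑ i ∈ Finset.Ico x.length c.length, |a i|) = 1)
    (hvw : ‖v - ∑ i ∈ Finset.Ico x.length c.length, a i • c.getD i 0‖ ≤ δ)
    (hy₀ : y₀ = ‖v‖⁻¹ • v)
    {bb : ℕ → ℝ} (hvrep : v = ∑ i ∈ Finset.Ico (n+1) q, bb i • e i) :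
    Good T e δ x n [y₀] := by
  classical
  refine ⟨by simp, c, hcT, hxc, a, fun i => ‖v‖⁻¹ * bb i,
    fun j => if j = 0 then x.length else c.length,
    fun _ => n+1, fun _ => q, fun _ => v, by simp, ?_, ?_, ?_, ?_, ?_⟩
  · intro j
    rcases Nat.eq_zero_or_pos j with rfl | hj
    · simp [hxlen.le]
    · simp [Nat.pos_iff_ne_zero.1 hj]
  · simp
  · intro j hj
    dsimp only
    omega
  · intro j hj
    simp only [List.length_singleton] at hj
    dsimp only
    omega
  · intro j hj
    simp only [List.length_singleton] at hj
    have hj0 : j = 0 := by omega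
    subst hj0
    refine ⟨by simpa using hasum, by simpa using hvw, by simpa using hy₀, ?_⟩
    have : (⟨0, hj⟩ : Fin [y₀].length) = ⟨0, by simp⟩ := rfl
    show y₀ = ∑ i ∈ Finset.Ico (n+1) q, (‖v‖⁻¹ * bb i) • e i
    rw [hy₀, hvrep, Finset.smul_sum]
    apply Finset.sum_congr rfl
    intro i _
    rw [smul_smul]

theorem Good_cons {e : ℕ → X} {δ : ℝ} {T : Set (List X)} {x c₀ : List X} {y₀ : X}
    {n q₀ : ℕ} (hc₀T : c₀ ∈ T) (hxc₀ : x <+: c₀) (hxlen : x.length < c₀.length)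
    (hq₀ : n + 1 < q₀)
    {a₀ : ℕ → ℝ} {v₀ : X}
    (hasum₀ : (∑ i ∈ Finset.Ico x.length c₀.length, |a₀ i|) = 1)
    (hvw₀ : ‖v₀ - ∑ i ∈ Finset.Ico x.length c₀.length, a₀ i • c₀.getD i 0‖ ≤ δ)
    (hy₀ : y₀ = ‖v₀‖⁻¹ • v₀)
    {bb₀ : ℕ → ℝ} (hvrep₀ : v₀ = ∑ i ∈ Finset.Ico (n+1) q₀, bb₀ i • e i)
    {ys : List X} (htail : Good T e δ c₀ q₀ ys) :
    Good T e δ x n (y₀ :: ys) := by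
  classical
  obtain ⟨hysne, ct, hctT, hc₀ct, at_, bbt, kt, pt, qt, vt, hk0t, hkmt, hklent,
    hpqt, hqpt, hdatat⟩ := htail
  have hkmt' : Monotone kt := monotone_nat_of_le_succ hkmt
  have hLpos : 0 < ys.length := List.length_pos_iff.2 hysne
  have hc₀len : c₀.length ≤ ct.length := hc₀ct.length_le
  have hgetD : ∀ i, i < c₀.length → c₀.getD i 0 = ct.getD i 0 := by
    intro i hi
    rw [List.getD_eq_getElem c₀ 0 hi, List.getD_eq_getElem ct 0 (by omega)]
    exact hc₀ct.getElem hi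
  have hxc₀l : x.length ≤ c₀.length := hxc₀.length_le
  have hc₀kt : c₀.length ≤ kt 0 := hk0t
  set a' : ℕ → ℝ := fun i =>
    if i < c₀.length then a₀ i else if i < kt 0 then 0 else at_ i with ha'
  set bb' : ℕ → ℝ := fun i => if i < q₀ then ‖v₀‖⁻¹ * bb₀ i else bbt i with hbb'
  refine ⟨by simp, ct, hctT, hxc₀.trans hc₀ct, a', bb',
    fun j => Nat.casesOn j x.length kt,
    fun j => Nat.casesOn j (n+1) pt,
    fun j => Nat.casesOn j q₀ qt,
    fun j => Nat.casesOn j v₀ vt,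
    le_rfl, ?_, ?_, ?_, ?_, ?_⟩
  · intro j
    cases j with
    | zero => exact le_trans hxc₀l hc₀kt
    | succ j' => exact hkmt j'
  · show kt ((y₀ :: ys).length - 1) ≤ ct.length
    simp only [List.length_cons]
    simpa using hklent
  · intro j hj
    cases j with
    | zero =>
      show n < n + 1 ∧ n + 1 < q₀
      omega
    | succ j' =>
      have hj' : j' < ys.length := by
        simp only [List.length_cons] at hj
        omega
      have := hpqt j' hj'
      show n < pt j' ∧ pt j' < qt j'
      omega
  · intro j hj
    simp only [List.length_cons] at hj
    cases j with
    | zero =>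
      show q₀ ≤ pt 0
      exact (hpqt 0 hLpos).1.le
    | succ j' =>
      show qt j' ≤ pt (j' + 1)
      exact hqpt j' (by omega)
  · intro j hj
    simp only [List.length_cons] at hj
    cases j with
    | zero =>
      have hIco : Finset.Ico x.length (kt 0)
          = Finset.Ico x.length c₀.length ∪ Finset.Ico c₀.length (kt 0) := by
        rw [Finset.Ico_union_Ico_eq_Ico hxc₀l hc₀kt]
      have hdisj : Disjoint (Finset.Ico x.length c₀.length)
          (Finset.Ico c₀.length (kt 0)) :=
        Finset.Ico_disjoint_Ico_consecutive _ _ _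
      refine ⟨?_, ?_, hy₀, ?_⟩
      · show ∑ i ∈ Finset.Ico x.length (kt 0), |a' i| = 1
        rw [hIco, Finset.sum_union hdisj]
        have e1 : ∑ i ∈ Finset.Ico x.length c₀.length, |a' i|
            = ∑ i ∈ Finset.Ico x.length c₀.length, |a₀ i| := by
          apply Finset.sum_congr rfl
          intro i hi
          simp only [ha']
          rw [if_pos (Finset.mem_Ico.1 hi).2]
        have e2 : ∑ i ∈ Finset.Ico c₀.length (kt 0), |a' i| = 0 := by
          apply Finset.sum_eq_zero
          intro i hi
          have h1 := Finset.mem_Ico.1 hi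
          simp only [ha']
          rw [if_neg (by omega), if_pos h1.2, abs_zero]
        rw [e1, e2, hasum₀, add_zero]
      · show ‖v₀ - ∑ i ∈ Finset.Ico x.length (kt 0), a' i • ct.getD i 0‖ ≤ δ
        have e3 : ∑ i ∈ Finset.Ico x.length (kt 0), a' i • ct.getD i 0
            = ∑ i ∈ Finset.Ico x.length c₀.length, a₀ i • c₀.getD i 0 := by
          rw [hIco, Finset.sum_union hdisj]
          have e4 : ∑ i ∈ Finset.Ico c₀.length (kt 0), a' i • ct.getD i 0 = 0 := by
            apply Finset.sum_eq_zero
            intro i hi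
            have h1 := Finset.mem_Ico.1 hi
            simp only [ha']
            rw [if_neg (by omega), if_pos h1.2, zero_smul]
          rw [e4, add_zero]
          apply Finset.sum_congr rfl
          intro i hi
          have h1 := Finset.mem_Ico.1 hi
          simp only [ha']
          rw [if_pos h1.2, hgetD i h1.2]
        rw [e3]
        exact hvw₀
      · show y₀ = ∑ i ∈ Finset.Ico (n+1) q₀, bb' i • e i
        rw [hy₀]
        nth_rewrite 2 [hvrep₀]
        rw [Finset.smul_sum]
        apply Finset.sum_congr rfl
        intro i hi
        simp only [hbb']
        rw [if_pos (Finset.mem_Ico.1 hi).2, smul_smul]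
    | succ j' =>
      have hj' : j' < ys.length := by omega
      obtain ⟨ht1, ht2, ht3, ht4⟩ := hdatat j' hj'
      have hrange : ∀ i, kt j' ≤ i → a' i = at_ i := by
        intro i hi
        have hk0i : kt 0 ≤ i := le_trans (hkmt' (Nat.zero_le _)) hi
        simp only [ha']
        rw [if_neg (by omega), if_neg (by omega)]
      have e1 : ∑ i ∈ Finset.Ico (kt j') (kt (j'+1)), |a' i|
          = ∑ i ∈ Finset.Ico (kt j') (kt (j'+1)), |at_ i| := by
        apply Finset.sum_congr rfl
        intro i hi
        rw [hrange i (Finset.mem_Ico.1 hi).1]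
      have e2 : ∑ i ∈ Finset.Ico (kt j') (kt (j'+1)), a' i • ct.getD i 0
          = ∑ i ∈ Finset.Ico (kt j') (kt (j'+1)), at_ i • ct.getD i 0 := by
        apply Finset.sum_congr rfl
        intro i hi
        rw [hrange i (Finset.mem_Ico.1 hi).1]
      have hget : (y₀ :: ys).get ⟨j' + 1, by simp only [List.length_cons]; omega⟩
          = ys.get ⟨j', hj'⟩ := rfl
      refine ⟨?_, ?_, ?_, ?_⟩
      · show ∑ i ∈ Finset.Ico (kt j') (kt (j'+1)), |a' i| = 1
        rw [e1]
        exact ht1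
      · show ‖vt j' - ∑ i ∈ Finset.Ico (kt j') (kt (j'+1)), a' i • ct.getD i 0‖ ≤ δ
        rw [e2]
        exact ht2
      · show (y₀ :: ys).get ⟨j' + 1, hj⟩ = ‖vt j'‖⁻¹ • vt j'
        exact ht3
      · show (y₀ :: ys).get ⟨j' + 1, hj⟩ = ∑ i ∈ Finset.Ico (pt j') (qt j'), bb' i • e i
        have : (y₀ :: ys).get ⟨j' + 1, hj⟩ = ys.get ⟨j', hj'⟩ := rfl
        rw [this, ht4]
        apply Finset.sum_congr rfl
        intro i hi
        have hpi := (Finset.mem_Ico.1 hi).1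
        have hq₀pt : q₀ < pt j' := (hpqt j' hj').1
        simp only [hbb']
        rw [if_neg (by omega)]

end AuxE


section AuxF
variable {X : Type u} [NormedAddCommGroup X] [NormedSpace ℝ X]

theorem piece_exists {e : ℕ → X} (he : IsSchauderBasis e) {K δ : ℝ} (hK : 1 ≤ K)
    (hδ0 : 0 < δ) (hδ1 : δ < K⁻¹)
    {T : Set (List X)} (hT1 : ∀ l ∈ T, IsL1Node K l) (hTne : ∀ l ∈ T, l ≠ [])
    {β' : Ordinal.{0}}
    (hIH : ∀ x' ∈ derivIter listLt (insert [] T) (Ordinal.omega0 * β'), ∀ n' : ℕ,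
      ∃ S₁ : Set (List X), S₁.Countable ∧ (∀ ys ∈ S₁, Good T e δ x' n' ys) ∧
        (∀ γ, γ < β' → derivIter listLt S₁ γ ≠ ∅) ∧ derivIter listLt S₁ β' = ∅)
    {x : List X}
    (hx : x ∈ derivIter listLt (insert [] T) (Ordinal.omega0 * β' + Ordinal.omega0))
    (m : ℕ) :
    ∃ (S : Set (List X)) (y₀ : X) (qq : ℕ),
      S.Countable ∧ (∀ ys ∈ S, Good T e δ x m ys) ∧
      (∀ γ, γ < β' + 1 → derivIter listLt S γ ≠ ∅) ∧
      derivIter listLt S (β' + 1) = ∅ ∧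
      (∀ ys ∈ S, ∃ t, ys = y₀ :: t) ∧ m + 1 < qq ∧ ‖y₀‖ = 1 ∧
      ∃ bb : ℕ → ℝ, y₀ = ∑ i ∈ Finset.Ico (m+1) qq, bb i • e i := by
  classical
  obtain ⟨c, y₀, q, hc, hcT, hxc, hxlen, hq, a, v, hasum, hvw, hvne, hy₀, bb, hvrep⟩ :=
    chunk_exists he hK hδ0 hδ1 hT1 hTne hx m
  obtain ⟨S₁, hS₁cnt, hS₁good, hS₁big, hS₁empty⟩ := hIH c hc q
  have h0 : ([] : List X) ∉ S₁ := fun h => (hS₁good [] h).1 rfl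
  set S : Set (List X) := (fun t => y₀ :: t) '' (insert [] S₁) with hS
  have hy₀norm : ‖y₀‖ = 1 := by
    rw [hy₀, norm_smul, norm_inv, norm_norm, inv_mul_cancel₀]
    intro h
    exact hvne (norm_eq_zero.1 h)
  refine ⟨S, y₀, q, ?_, ?_, ?_, ?_, ?_, hq, hy₀norm, ?_⟩
  · exact (hS₁cnt.insert _).image _
  · rintro ys ⟨t, ht, rfl⟩
    rcases Set.mem_insert_iff.1 ht with rfl | htS₁
    · exact Good_single hcT hxc hxlen hq hasum hvw hy₀ hvrep
    · exact Good_cons hcT hxc hxlen hq hasum hvw hy₀ hvrep (hS₁good t htS₁)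
  · intro γ hγ
    have hγle : γ ≤ β' := by
      rwa [Ordinal.add_one_eq_succ, Order.lt_succ_iff] at hγ
    rw [hS, derivIter_cons_image, derivIter_insert_nil h0 γ
      (fun γ' hγ' => hS₁big γ' (lt_of_lt_of_le hγ' hγle))]
    apply Set.Nonempty.ne_empty
    exact ⟨[y₀], [], Set.mem_insert _ _, rfl⟩
  · rw [hS, derivIter_cons_image]
    have h1 : derivIter listLt (insert [] S₁) β' ⊆ {[]} := by
      intro z hz
      rcases Set.mem_insert_iff.1 (derivIter_insert_nil_subset β' hz) with rfl | hzz
      · rfl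
      · rw [hS₁empty] at hzz
        exact absurd hzz (Set.notMem_empty z)
    have h2 : derivIter listLt (insert [] S₁) (β' + 1) = ∅ := by
      rw [derivIter_succ]
      rw [Set.eq_empty_iff_forall_notMem]
      rintro z ⟨hz1, y, hy1, hy2⟩
      have := h1 hy1
      rw [Set.mem_singleton_iff] at this
      subst this
      exact not_listLt_nil hy2
    rw [h2, Set.image_empty]
  · rintro ys ⟨t, _, rfl⟩
    exact ⟨t, rfl⟩
  · refine ⟨fun i => ‖v‖⁻¹ * bb i, ?_⟩
    rw [hy₀]
    nth_rewrite 2 [hvrep]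
    rw [Finset.smul_sum]
    exact Finset.sum_congr rfl fun i _ => by dsimp only; rw [smul_smul]

theorem main_induction {e : ℕ → X} (he : IsSchauderBasis e) {K δ : ℝ} (hK : 1 ≤ K)
    (hδ0 : 0 < δ) (hδ1 : δ < K⁻¹)
    {T : Set (List X)} (hT1 : ∀ l ∈ T, IsL1Node K l) (hTne : ∀ l ∈ T, l ≠ []) :
    ∀ β : Ordinal.{0}, β.card ≤ Cardinal.aleph0 →
      ∀ x ∈ derivIter listLt (insert [] T) (Ordinal.omega0 * β), ∀ n : ℕ,
      ∃ S : Set (List X), S.Countable ∧ (∀ ys ∈ S, Good T e δ x n ys) ∧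
        (∀ γ, γ < β → derivIter listLt S γ ≠ ∅) ∧ derivIter listLt S β = ∅ := by
  intro β
  induction β using Ordinal.induction with
  | _ β IH =>
  intro hβ x hx n
  rcases Ordinal.zero_or_succ_or_isSuccLimit β with rfl | ⟨β', rfl⟩ | hl
  · refine ⟨∅, Set.countable_empty, fun ys h => absurd h (Set.notMem_empty ys), ?_, ?_⟩
    · intro γ hγ
      exact absurd hγ (not_lt_of_ge zero_le)
    · rw [derivIter_zero]
  · -- successor case
    rw [← Ordinal.add_one_eq_succ] at *
    have hβ' : β'.card ≤ Cardinal.aleph0 :=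
      le_trans (Ordinal.card_le_card (lt_add_one β').le) hβ
    have hx' : x ∈ derivIter listLt (insert [] T) (Ordinal.omega0 * β' + Ordinal.omega0) := by
      rw [Ordinal.add_one_eq_succ, Ordinal.mul_succ] at hx
      exact hx
    obtain ⟨S, y₀, qq, h1, h2, h3, h4, _, _, _, _⟩ :=
      piece_exists he hK hδ0 hδ1 hT1 hTne
        (fun x' hx' n' => IH β' (lt_add_one β') hβ' x' hx' n') hx' n
    exact ⟨S, h1, h2, h3, h4⟩
  · -- limit case
    have hβpos : (0 : Ordinal.{0}) < β := hl.pos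
    have hcnt : (Set.Iio β).Countable := by
      rw [← Cardinal.le_aleph0_iff_set_countable, Ordinal.mk_Iio_ordinal]
      rw [← Cardinal.lift_aleph0.{1,0}]
      exact Cardinal.lift_le.2 hβ
    obtain ⟨f, hf⟩ := Set.Countable.exists_eq_range hcnt ⟨0, hβpos⟩
    have hfval : ∀ k : ℕ, f k < β := by
      intro k
      have : f k ∈ Set.Iio β := by
        rw [hf]
        exact ⟨k, rfl⟩
      exact this
    have hfcof : ∀ γ, γ < β → ∃ k, f k = γ := by
      intro γ hγ
      have : γ ∈ Set.range f := by
        rw [← hf]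
        exact hγ
      obtain ⟨k, hk⟩ := this
      exact ⟨k, hk⟩
    have hstep : ∀ (m k : ℕ),
        ∃ (S : Set (List X)) (y₀ : X) (qq : ℕ),
          S.Countable ∧ (∀ ys ∈ S, Good T e δ x m ys) ∧
          (∀ γ, γ < f k + 1 → derivIter listLt S γ ≠ ∅) ∧
          derivIter listLt S (f k + 1) = ∅ ∧
          (∀ ys ∈ S, ∃ t, ys = y₀ :: t) ∧ m + 1 < qq ∧ ‖y₀‖ = 1 ∧
          ∃ bb : ℕ → ℝ, y₀ = ∑ i ∈ Finset.Ico (m+1) qq, bb i • e i := by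
      intro m k
      have hsucc : f k + 1 < β := by
        rw [Ordinal.add_one_eq_succ]
        exact hl.succ_lt (hfval k)
      have hx' : x ∈ derivIter listLt (insert [] T)
          (Ordinal.omega0 * f k + Ordinal.omega0) := by
        apply derivIter_antitone listLt _ _ hx
        calc Ordinal.omega0 * f k + Ordinal.omega0
            = Ordinal.omega0 * Order.succ (f k) := (Ordinal.mul_succ _ _).symm
          _ ≤ Ordinal.omega0 * β := by
              apply mul_le_mul_right
              rw [← Ordinal.add_one_eq_succ]
              exact hsucc.le
      exact piece_exists he hK hδ0 hδ1 hT1 hTne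
        (fun x' hx' n' => IH (f k) (hfval k) (le_trans (Ordinal.card_le_card (hfval k).le) hβ) x' hx' n')
        hx' m
    choose Sf y₀f qf hP1 hP2 hP3 hP4 hP5 hP6 hP7 hP8 using hstep
    set cut : ℕ → ℕ := fun k => Nat.rec n (fun k' prev => qf prev k') k with hcutdef
    have hcut0 : cut 0 = n := rfl
    have hcutsucc : ∀ k, cut (k+1) = qf (cut k) k := fun k => rfl
    have hcutlt : ∀ k, cut k + 1 < cut (k+1) := by
      intro k
      rw [hcutsucc k]
      exact hP6 (cut k) k
    have hcutmono : StrictMono cut := strictMono_nat_of_lt_succ (fun k => by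
      have := hcutlt k
      omega)
    have hncut : ∀ k, n ≤ cut k := by
      intro k
      rcases Nat.eq_zero_or_pos k with rfl | hk
      · exact le_of_eq hcut0.symm
      · rw [← hcut0]
        exact (hcutmono.le_iff_le.2 (Nat.zero_le k))
    have hydist : ∀ k k', k < k' → y₀f (cut k) k ≠ y₀f (cut k') k' := by
      intro k k' hkk' heq
      obtain ⟨bb₁, hb₁⟩ := hP8 (cut k) k
      obtain ⟨bb₂, hb₂⟩ := hP8 (cut k') k'
      have hnorm := hP7 (cut k) k
      have hgap : cut (k+1) ≤ cut k' + 1 := by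
        have : cut (k+1) ≤ cut k' := hcutmono.le_iff_le.2 hkk'
        omega
      have hdisj : Disjoint (Finset.Ico (cut k + 1) (cut (k+1)))
          (Finset.Ico (cut k' + 1) (cut (k'+1))) := by
        rw [Finset.disjoint_left]
        intro i hi hi'
        have h1 := Finset.mem_Ico.1 hi
        have h2 := Finset.mem_Ico.1 hi'
        omega
      apply disjoint_rep_ne he hdisj hb₁ (by rw [heq]; exact hb₂)
      intro h
      rw [h, norm_zero] at hnorm
      exact one_ne_zero hnorm.symm
    set piece : ℕ → Set (List X) := fun k => Sf (cut k) k with hpiece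
    have hdisjp : ∀ k k' : ℕ, k ≠ k' → ∀ x₁ ∈ piece k, ∀ x₂ ∈ piece k', ¬ x₁ <+: x₂ := by
      intro k k' hkk' x₁ hx₁ x₂ hx₂ hpre
      obtain ⟨t₁, ht₁⟩ := hP5 (cut k) k x₁ hx₁
      obtain ⟨t₂, ht₂⟩ := hP5 (cut k') k' x₂ hx₂
      rw [ht₁, ht₂, List.cons_prefix_cons] at hpre
      rcases Nat.lt_or_ge k k' with h | h
      · exact hydist k k' h hpre.1
      · exact hydist k' k (by omega) hpre.1.symm
    refine ⟨⋃ k, piece k, Set.countable_iUnion (fun k => hP1 (cut k) k), ?_, ?_, ?_⟩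
    · intro ys hys
      obtain ⟨k, hk⟩ := Set.mem_iUnion.1 hys
      exact Good_mono_n (hncut k) (hP2 (cut k) k ys hk)
    · intro γ hγ
      obtain ⟨k, hk⟩ := hfcof γ hγ
      rw [derivIter_iUnion piece hdisjp]
      intro h
      have h1 : derivIter listLt (piece k) γ = ∅ := by
        rw [Set.eq_empty_iff_forall_notMem]
        intro z hz
        rw [Set.eq_empty_iff_forall_notMem] at h
        exact h z (Set.mem_iUnion.2 ⟨k, hz⟩)
      exact hP3 (cut k) k γ (by rw [hk]; exact lt_add_one _) h1
    · rw [derivIter_iUnion piece hdisjp]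
      rw [Set.eq_empty_iff_forall_notMem]
      intro z hz
      obtain ⟨k, hk⟩ := Set.mem_iUnion.1 hz
      have hsucc : f k + 1 ≤ β := by
        rw [Ordinal.add_one_eq_succ]
        exact (hl.succ_lt (hfval k)).le
      have := derivIter_antitone listLt (piece k) hsucc hk
      rw [hP4 (cut k) k] at this
      exact absurd this (Set.notMem_empty z)

end AuxF

/-- **Proposition.** If `X` has a Schauder basis `(e_i)` and `X` admits an ℓ₁-`K`-tree of
order at least `ω·α`, then for every `ε > 0`, `X` admits an ℓ₁-`(K+ε)`-block basis tree
(with respect to `(e_i)`) of order at least `α`. -/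
theorem index_to_block_index (X : Type u) [NormedAddCommGroup X] [NormedSpace ℝ X]
    [CompleteSpace X] (e : ℕ → X) (he : IsSchauderBasis e)
    (K : ℝ) (hK : 1 ≤ K) (α : Ordinal.{0}) (hα : α.card ≤ Cardinal.aleph0)
    (ε : ℝ) (hε : 0 < ε)
    (hex : ∃ T : Set (List X), IsL1KTree K T ∧ TreeWF listLt T ∧
      Ordinal.omega0 * α ≤ treeOrder listLt T) :
    ∃ S : Set (List X), IsL1KBlockTree e (K + ε) S ∧ TreeWF listLt S ∧
      α ≤ treeOrder listLt S := by
  classical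
  obtain ⟨T, ⟨⟨hTne', hTcnt, hTnil⟩, hTL1⟩, hWF, horder⟩ := hex
  have hKpos : (0:ℝ) < K := lt_of_lt_of_le one_pos hK
  set δ : ℝ := ε / (2*K*(K+ε+1)) with hδdef
  have hKε : (0:ℝ) < K + ε := by linarith
  have hKε1 : (0:ℝ) < K + ε + 1 := by linarith
  have hδ0 : 0 < δ := by rw [hδdef]; positivity
  have hδmul : δ * (2*K*(K+ε+1)) = ε := by
    rw [hδdef]
    field_simp
  have hδ1 : δ < K⁻¹ := by
    rw [show K⁻¹ = 1/K from (one_div K).symm, lt_div_iff₀ hKpos]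
    nlinarith [hδmul, hδ0, hε, hK]
  have hyδ : ε * K⁻¹ = 2*δ*(K+ε+1) := by
    rw [hδdef]
    field_simp
  have hlow : (K+ε)⁻¹ ≤ (K⁻¹ - δ)/(1+δ) := by
    rw [inv_eq_one_div, div_le_div_iff₀ hKε (by linarith : (0:ℝ) < 1+δ)]
    have hKinv : K * K⁻¹ = 1 := mul_inv_cancel₀ hKpos.ne'
    nlinarith [hyδ, hKinv, hδ0, hKε1, hε, hK]
  have hbig : ∀ γ, γ < Ordinal.omega0 * α → derivIter listLt T γ ≠ ∅ := by
    intro γ hγ h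
    have h1 : treeOrder listLt T ≤ γ := csInf_le' h
    exact absurd (le_trans horder h1) (not_le.2 hγ)
  by_cases hα0 : α = 0
  · subst hα0
    have he0 : e 0 ≠ 0 := schauder_e_ne_zero he 0
    set y : X := ‖e 0‖⁻¹ • e 0 with hy
    have hynorm : ‖y‖ = 1 := by
      rw [hy, norm_smul, norm_inv, norm_norm, inv_mul_cancel₀ (norm_ne_zero_iff.2 he0)]
    refine ⟨{[y]}, ⟨⟨⟨Set.singleton_nonempty _, Set.countable_singleton _, ?_⟩, ?_⟩, ?_⟩,
      ?_, zero_le⟩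
    · intro l hl
      rw [Set.mem_singleton_iff] at hl
      subst hl
      simp
    · intro l hl
      rw [Set.mem_singleton_iff] at hl
      subst hl
      refine ⟨?_, 1, 1, one_pos, one_pos, by norm_num; linarith, ?_⟩
      · intro z hz
        rw [List.mem_singleton] at hz
        subst hz
        exact hynorm
      · intro a
        have e1 : (∑ i : Fin ([y].length), a i • [y].get i) = a ⟨0, Nat.one_pos⟩ • y :=
          Fin.sum_univ_one (fun i : Fin 1 => a i • [y].get i)
        have e2 : (∑ i : Fin ([y].length), |a i|) = |a ⟨0, Nat.one_pos⟩| :=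
          Fin.sum_univ_one (fun i : Fin 1 => |a i|)
        constructor
        · rw [one_mul, e1, e2, norm_smul, Real.norm_eq_abs, hynorm, mul_one]
        · rw [one_mul, e1, e2, norm_smul, Real.norm_eq_abs, hynorm, mul_one]
    · intro l hl
      rw [Set.mem_singleton_iff] at hl
      subst hl
      refine ⟨by simp, fun _ => {0}, fun _ => ‖e 0‖⁻¹, fun j => Finset.singleton_nonempty _,
        ?_, ?_⟩
      · intro j₁ j₂ h12
        have h1 := j₁.2
        have h2 := j₂.2
        simp only [List.length_singleton] at h1 h2
        omega
      · intro j
        have hget : [y].get j = y := by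
          have hj : j.1 = 0 := by
            have := j.2
            simp only [List.length_singleton] at this
            omega
          have hjeq : j = ⟨0, Nat.one_pos⟩ := Fin.ext hj
          rw [hjeq]
          rfl
        constructor
        · show [y].get j = ∑ i ∈ ({0} : Finset ℕ), ‖e 0‖⁻¹ • e i
          rw [hget, Finset.sum_singleton, hy]
        · rw [hget, hynorm]
    · rintro ⟨C, hCsub, hCinf, _⟩
      exact hCinf ((Set.finite_singleton _).subset hCsub)
  · have hαpos : (0:Ordinal.{0}) < α := pos_iff_ne_zero.2 hα0
    have hx0 : ([] : List X) ∈ derivIter listLt (insert [] T) (Ordinal.omega0 * α) := by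
      rw [derivIter_insert_nil (fun h => hTnil [] h rfl) _ (fun γ' hγ' => hbig γ' hγ')]
      exact Set.mem_insert _ _
    obtain ⟨S, hScnt, hSgood, hSbig, hSempty⟩ :=
      main_induction he hK hδ0 hδ1 hTL1 hTnil α hα [] hx0 0
    have hSne : S.Nonempty := by
      rw [Set.nonempty_iff_ne_empty]
      have := hSbig 0 hαpos
      rwa [derivIter_zero] at this
    have hprops : ∀ l ∈ S, IsL1Node (K+ε) l ∧ IsBlockNode e l := fun l hl =>
      Good_main hK hε hδ0 hδ1 hlow hTL1 hTnil (hSgood l hl)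
    refine ⟨S, ⟨⟨⟨hSne, hScnt, fun l hl => (hSgood l hl).1⟩, fun l hl => (hprops l hl).1⟩,
      fun l hl => (hprops l hl).2⟩, treeWF_of_derivIter_empty hSempty, ?_⟩
    apply le_csInf ⟨α, hSempty⟩
    intro b hb
    by_contra hcon
    push_neg at hcon
    exact hSbig b hcon hb
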